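/- With the prior π(β, A) = 1 in the balanced model, reparametrizing B = V/(V+A), the marginal posterior density of B given y is proportional to B^{(m-p-4)/2} exp(-BS/(2V)) on (0,1), where S = ||y - X β̂||²; and its mode is min((m-p-4)V/S, 1) when m > p + 4. -/

import Mathlib

/-!
The normal equations `Xᵀ (y - X β̂) = 0` give the Pythagorean split
`‖y - X β‖² = S + ‖X (β̂ - β)‖²`, so the likelihood of `β` under `N(X β, (V/B) I)` is
`(2πV/B)^{-m/2} exp(-BS/(2V))` times a Gaussian kernel in `β̂ - β`. Translating by `β̂` and
scaling by `√B` turns its integral into `B^{-p/2} J`, where `J = ∫ exp(-‖X u‖²/(2V)) du` is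
finite and positive because full column rank makes `‖X u‖²` coercive. Dividing by the prior
factor `B²` leaves `B^{(m-p-4)/2} exp(-BS/(2V))`. For the mode, `log x ≤ x - 1` shows that
`a log B - λ B` is maximised on `(0, 1]` at `min (a/λ) 1`.
-/

open Matrix MeasureTheory Real

noncomputable def lsq {m p : ℕ} (X : Matrix (Fin m) (Fin p) ℝ) (y : Fin m → ℝ) : Fin p → ℝ :=
  ((Xᵀ * X)⁻¹ * Xᵀ).mulVec y

noncomputable def rss {m p : ℕ} (X : Matrix (Fin m) (Fin p) ℝ) (y : Fin m → ℝ) : ℝ :=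
  ∑ i, (y i - X.mulVec (lsq X y) i) ^ 2

/-- The unnormalized posterior density of `B` on `(0,1)`:
`g(B) = B^{(m-p-4)/2} exp(-B S/(2V))`. -/
noncomputable def gB (m p : ℕ) (V S B : ℝ) : ℝ :=
  B ^ (((m : ℝ) - p - 4) / 2) * Real.exp (-B * S / (2 * V))

theorem Matrix.mulVec_injective_of_rank_eq_card {K ι κ : Type*} [Field K] [Fintype κ]
    (A : Matrix ι κ K) (hA : A.rank = Fintype.card κ) : Function.Injective A.mulVec := by
  change Function.Injective A.mulVecLin
  rw [← LinearMap.ker_eq_bot, ← Submodule.finrank_eq_zero]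
  have := A.mulVecLin.finrank_range_add_finrank_ker
  rw [← Matrix.rank, hA, Module.finrank_fintype_fun_eq_card] at this
  omega

section FullColumnRank

variable {ι κ : Type*} [Fintype ι] [Fintype κ] (A : Matrix ι κ ℝ)

theorem Matrix.isUnit_det_transpose_mul_self [DecidableEq κ] (hA : Function.Injective A.mulVec) :
    IsUnit (Aᵀ * A).det := by
  rw [← isUnit_iff_isUnit_det, ← mulVec_injective_iff_isUnit]
  change Function.Injective (Aᵀ * A).mulVecLin
  rw [← LinearMap.ker_eq_bot, ker_mulVecLin_transpose_mul_self, LinearMap.ker_eq_bot]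
  exact hA

theorem Matrix.exists_pos_mul_sum_sq_le_sum_sq_mulVec (hA : Function.Injective A.mulVec) :
    ∃ ε > 0, ∀ v : κ → ℝ, ε * ∑ j, v j ^ 2 ≤ ∑ i, (A *ᵥ v) i ^ 2 := by
  classical
  obtain ⟨K, hK, hanti⟩ := (toEuclideanLin A).exists_antilipschitzWith
    (LinearMap.ker_eq_bot.2 fun u w huw ↦
      WithLp.ofLp_injective 2 <| hA <| congrArg WithLp.ofLp huw)
  refine ⟨((K : ℝ) ^ 2)⁻¹, by positivity, fun v ↦ ?_⟩
  have h := hanti.le_mul_dist (WithLp.toLp 2 v) 0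
  simp only [dist_zero_right, map_zero, toLpLin_toLp] at h
  rw [inv_mul_le_iff₀ (by positivity)]
  have := pow_le_pow_left₀ (norm_nonneg _) h 2
  rwa [mul_pow, EuclideanSpace.real_norm_sq_eq, EuclideanSpace.real_norm_sq_eq] at this

theorem Matrix.integrable_exp_neg_sum_sq_mulVec_div (hA : Function.Injective A.mulVec) {s : ℝ}
    (hs : 0 < s) : Integrable fun u : κ → ℝ ↦ exp (-(∑ i, (A *ᵥ u) i ^ 2) / (2 * s)) := by
  obtain ⟨ε, hε, hcoer⟩ := A.exists_pos_mul_sum_sq_le_sum_sq_mulVec hA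
  have hdom : Integrable fun u : κ → ℝ ↦ ∏ j, exp (-(ε / (2 * s)) * u j ^ 2) :=
    Integrable.fintype_prod (f := fun _ t ↦ exp (-(ε / (2 * s)) * t ^ 2))
      fun _ ↦ integrable_exp_neg_mul_sq (by positivity)
  refine hdom.mono' (by fun_prop) (Filter.Eventually.of_forall fun u ↦ ?_)
  rw [norm_of_nonneg (exp_pos _).le, ← exp_sum, exp_le_exp, ← Finset.mul_sum, neg_mul,
    neg_div, neg_le_neg_iff, div_mul_eq_mul_div]
  exact div_le_div_of_nonneg_right (hcoer u) (by positivity)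

theorem Matrix.integral_exp_neg_sum_sq_mulVec_div_pos (hA : Function.Injective A.mulVec)
    {s : ℝ} (hs : 0 < s) : 0 < ∫ u : κ → ℝ, exp (-(∑ i, (A *ᵥ u) i ^ 2) / (2 * s)) :=
  integral_exp_pos (A.integrable_exp_neg_sum_sq_mulVec_div hA hs)

end FullColumnRank

theorem Real.inv_sqrt_pow_eq_rpow {x : ℝ} (hx : 0 ≤ x) (k : ℕ) :
    (√x)⁻¹ ^ k = x ^ (-(k : ℝ) / 2) := by
  rw [sqrt_eq_rpow, ← rpow_neg hx, ← rpow_natCast, ← rpow_mul hx]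
  ring_nf

theorem integral_exp_neg_sum_sq_mulVec_sub {ι κ : Type*} [Fintype ι] [Fintype κ]
    (A : Matrix ι κ ℝ) (b : κ → ℝ) (s : ℝ) {t : ℝ} (ht : 0 < t) :
    ∫ β, exp (-(∑ i, (A *ᵥ (b - β)) i ^ 2) / (2 * (s / t))) =
      t ^ (-(Fintype.card κ : ℝ) / 2) * ∫ u, exp (-(∑ i, (A *ᵥ u) i ^ 2) / (2 * s)) := by
  set g : (κ → ℝ) → ℝ := fun u ↦ exp (-(∑ i, (A *ᵥ u) i ^ 2) / (2 * s))
  have hscale : ∀ w : κ → ℝ,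
      exp (-(∑ i, (A *ᵥ w) i ^ 2) / (2 * (s / t))) = g (√t • w) := fun w ↦ by
    simp only [g, mulVec_smul, Pi.smul_apply, smul_eq_mul, mul_pow, sq_sqrt ht.le,
      ← Finset.mul_sum]
    congr 1
    field_simp
  simp only [hscale]
  rw [integral_sub_left_eq_self (fun w ↦ g (√t • w)), Measure.integral_comp_smul,
    Module.finrank_fintype_fun_eq_card, abs_inv, abs_pow, abs_of_pos (sqrt_pos.2 ht),
    ← inv_pow, inv_sqrt_pow_eq_rpow ht.le, smul_eq_mul]

section LeastSquares

variable {m p : ℕ} (X : Matrix (Fin m) (Fin p) ℝ)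

theorem transpose_mulVec_sub_mulVec_lsq (hX : Function.Injective X.mulVec) (y : Fin m → ℝ) :
    Xᵀ *ᵥ (y - X *ᵥ lsq X y) = 0 := by
  rw [mulVec_sub, lsq, mulVec_mulVec, mulVec_mulVec,
    mul_nonsing_inv_cancel_left _ _ (X.isUnit_det_transpose_mul_self hX), sub_self]

theorem sum_sq_sub_mulVec_eq_rss_add (hX : Function.Injective X.mulVec) (y : Fin m → ℝ)
    (β : Fin p → ℝ) :
    ∑ i, (y i - (X *ᵥ β) i) ^ 2 = rss X y + ∑ i, (X *ᵥ (lsq X y - β)) i ^ 2 := by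
  set r := y - X *ᵥ lsq X y
  set d := X *ᵥ (lsq X y - β)
  have hsplit : y - X *ᵥ β = r + d := by simp only [r, d, mulVec_sub]; abel
  have horth : r ⬝ᵥ d = 0 := by
    rw [dotProduct_mulVec, ← mulVec_transpose, transpose_mulVec_sub_mulVec_lsq X hX,
      zero_dotProduct]
  have hsq : ∀ v : Fin m → ℝ, ∑ i, v i ^ 2 = v ⬝ᵥ v := fun v ↦ by simp [dotProduct, sq]
  calc ∑ i, (y i - (X *ᵥ β) i) ^ 2 = (r + d) ⬝ᵥ (r + d) := by rw [← hsplit, ← hsq]; rfl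
    _ = r ⬝ᵥ r + d ⬝ᵥ d := by
      rw [add_dotProduct, dotProduct_add, dotProduct_add, dotProduct_comm d r, horth]; ring
    _ = rss X y + ∑ i, d i ^ 2 := by simp only [rss, hsq]; rfl

theorem prod_gaussian_mulVec_eq (hX : Function.Injective X.mulVec) (y : Fin m → ℝ)
    (β : Fin p → ℝ) (σ2 : ℝ) :
    ∏ i, (√(2 * π * σ2))⁻¹ * exp (-(y i - (X *ᵥ β) i) ^ 2 / (2 * σ2)) =
      (√(2 * π * σ2))⁻¹ ^ m * exp (-rss X y / (2 * σ2)) *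
        exp (-(∑ i, (X *ᵥ (lsq X y - β)) i ^ 2) / (2 * σ2)) := by
  rw [Finset.prod_mul_distrib, Finset.prod_const, Finset.card_univ, Fintype.card_fin,
    ← exp_sum, mul_assoc _ (exp _), ← exp_add, ← Finset.sum_div, Finset.sum_neg_distrib,
    sum_sq_sub_mulVec_eq_rss_add X hX, neg_add, add_div]

theorem integral_prod_gaussian_mulVec_div_sq (hX : Function.Injective X.mulVec)
    (y : Fin m → ℝ) {V B : ℝ} (hV : 0 < V) (hB : 0 < B) :
    (∫ β : Fin p → ℝ,
        (∏ i, (√(2 * π * (V / B)))⁻¹ * exp (-(y i - (X *ᵥ β) i) ^ 2 / (2 * (V / B)))) / B ^ 2) =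
      (2 * π * V) ^ (-(m : ℝ) / 2) * (∫ u, exp (-(∑ i, (X *ᵥ u) i ^ 2) / (2 * V))) *
        gB m p V (rss X y) B := by
  simp only [prod_gaussian_mulVec_eq X hX]
  rw [integral_div, integral_const_mul, integral_exp_neg_sum_sq_mulVec_sub X _ V hB,
    Fintype.card_fin, inv_sqrt_pow_eq_rpow (by positivity), gB,
    show 2 * π * (V / B) = 2 * π * V * B⁻¹ by ring, mul_rpow (by positivity) (by positivity),
    inv_rpow hB.le, ← rpow_neg hB.le, ← rpow_natCast B 2]
  have hexp : -rss X y / (2 * (V / B)) = -B * rss X y / (2 * V) := by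
    field_simp
  have hpow : B ^ (-(-(m : ℝ) / 2)) * B ^ (-(p : ℝ) / 2) / B ^ ((2 : ℕ) : ℝ) =
      B ^ (((m : ℝ) - p - 4) / 2) := by
    rw [← rpow_add hB, ← rpow_sub hB]
    congr 1
    push_cast
    ring
  rw [hexp, ← hpow]
  ring

end LeastSquares

theorem rpow_mul_exp_neg_mul_le_min {a lam B : ℝ} (ha : 0 < a) (hlam : 0 < lam) (hB : 0 < B)
    (hB1 : B ≤ 1) :
    B ^ a * exp (-(lam * B)) ≤ min (a / lam) 1 ^ a * exp (-(lam * min (a / lam) 1)) := by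
  set B₀ := min (a / lam) 1
  have hB₀ : 0 < B₀ := lt_min (div_pos ha hlam) one_pos
  rw [rpow_def_of_pos hB, rpow_def_of_pos hB₀, ← exp_add, ← exp_add, exp_le_exp]
  rcases le_or_gt (a / lam) 1 with h | h
  · have hB₀_eq : B₀ = a / lam := min_eq_left h
    have hlog := log_le_sub_one_of_pos (div_pos hB hB₀)
    rw [log_div hB.ne' hB₀.ne'] at hlog
    have hkey : a * (B / B₀ - 1) = lam * B - lam * B₀ := by
      rw [hB₀_eq]; field_simp
    nlinarith
  · have hB₀_eq : B₀ = 1 := min_eq_right h.le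
    have hlam_lt : lam < a := by rwa [one_lt_div hlam] at h
    have hlog := log_le_sub_one_of_pos hB
    have hlog_nonpos : log B ≤ 0 := log_nonpos hB.le hB1
    rw [hB₀_eq, log_one]
    nlinarith

theorem gB_le_gB_min {m p : ℕ} (hmp : p + 4 < m) {V S B : ℝ} (hV : 0 < V) (hS : 0 < S)
    (hB : 0 < B) (hB1 : B ≤ 1) :
    gB m p V S B ≤ gB m p V S (min (((m : ℝ) - p - 4) * V / S) 1) := by
  have ha : 0 < ((m : ℝ) - p - 4) / 2 := by
    have : (p : ℝ) + 4 < m := by exact_mod_cast hmp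
    linarith
  have hmode : ((m : ℝ) - p - 4) * V / S = ((m : ℝ) - p - 4) / 2 / (S / (2 * V)) := by
    field_simp
  have hexp : ∀ t : ℝ, -t * S / (2 * V) = -(S / (2 * V) * t) := fun t ↦ by ring
  simp only [gB, hexp, hmode]
  exact rpow_mul_exp_neg_mul_le_min ha (by positivity) hB hB1

theorem statement14_general {m p : ℕ}
    (X : Matrix (Fin m) (Fin p) ℝ) (hX : X.rank = p)
    (y : Fin m → ℝ) (V : ℝ) (hV : 0 < V) (hS : 0 < rss X y) :
    ∃ c > 0,
      (∀ B ∈ Set.Ioo (0 : ℝ) 1,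
        (∫ β : Fin p → ℝ,
            (∏ i, (Real.sqrt (2 * π * (V / B)))⁻¹ *
              Real.exp (-(y i - X.mulVec β i) ^ 2 / (2 * (V / B)))) / B ^ 2)
          = c * gB m p V (rss X y) B) ∧
      (m > p + 4 → ∀ B ∈ Set.Ioo (0 : ℝ) 1,
        gB m p V (rss X y) B
          ≤ gB m p V (rss X y) (min (((m : ℝ) - p - 4) * V / rss X y) 1)) := by
  have hinj : Function.Injective X.mulVec :=
    X.mulVec_injective_of_rank_eq_card (by rwa [Fintype.card_fin])
  exact ⟨(2 * π * V) ^ (-(m : ℝ) / 2) * ∫ u, exp (-(∑ i, (X *ᵥ u) i ^ 2) / (2 * V)),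
    mul_pos (by positivity) (X.integral_exp_neg_sum_sq_mulVec_div_pos hinj hV),
    fun B hB ↦ integral_prod_gaussian_mulVec_div_sq X hinj y hV hB.1,
    fun hmp B hB ↦ gB_le_gB_min hmp hV hS hB.1 hB.2.le⟩

/-- With the prior `π(β, A) = 1` in the balanced model, reparametrizing
`B = V/(V+A)` (so that `π(β, B) ∝ B⁻²` and the marginal law of `y` given `(β, B)` is
`N(Xβ, (V/B) I_m)`), the marginal posterior density of `B` given `y`, obtained by
integrating out `β`, is proportional on `(0,1)` to `B^{(m-p-4)/2} exp(-BS/(2V))` with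
`S = ‖y - Xβ̂‖²`; and for `m > p + 4` its mode is `min((m-p-4)V/S, 1)`. -/
theorem statement14 {m p : ℕ} (hpm : p < m)
    (X : Matrix (Fin m) (Fin p) ℝ) (hX : X.rank = p)
    (y : Fin m → ℝ) (V : ℝ) (hV : 0 < V) (hS : 0 < rss X y) :
    ∃ c > 0,
      (∀ B ∈ Set.Ioo (0 : ℝ) 1,
        (∫ β : Fin p → ℝ,
            (∏ i, (Real.sqrt (2 * π * (V / B)))⁻¹ *
              Real.exp (-(y i - X.mulVec β i) ^ 2 / (2 * (V / B)))) / B ^ 2)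
          = c * gB m p V (rss X y) B) ∧
      (m > p + 4 → ∀ B ∈ Set.Ioo (0 : ℝ) 1,
        gB m p V (rss X y) B
          ≤ gB m p V (rss X y) (min (((m : ℝ) - p - 4) * V / rss X y) 1)) :=
  statement14_general X hX y V hV hS
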